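/- Let H = ℓ²(F₂) where F₂ is the free group on two generators, let A = C*_r(F₂) + K(H) ⊆ B(H), where C*_r(F₂) acts by the left regular representation and K(H) denotes the compact operators. Let {e_g : g ∈ F₂} be the rank-one projections onto the basis vectors ξ_g, and let C be the C*-algebra generated by {e_g : g ∈ F₂} ∪ {1}. Then C is a maximal abelian subalgebra of A. -/

import Mathlib

set_option maxHeartbeats 1000000
set_option synthInstance.maxHeartbeats 1000000

open scoped ComplexOrder TensorProduct

noncomputable section

/-- A state on a (possibly non-unital) normed star algebra: a norm-one positive
continuous linear functional. -/
def IsState {A : Type*} [NonUnitalNormedRing A] [StarRing A] [NormedSpace ℂ A]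
    (φ : A →L[ℂ] ℂ) : Prop :=
  ‖φ‖ = 1 ∧ ∀ a : A, 0 ≤ φ (star a * a)

/-- A pure state: a state which is an extreme point of the state space. -/
def IsPureState {A : Type*} [NonUnitalNormedRing A] [StarRing A] [NormedSpace ℂ A]
    (φ : A →L[ℂ] ℂ) : Prop :=
  IsState φ ∧ ∀ (ψ₁ ψ₂ : A →L[ℂ] ℂ) (t : ℝ), IsState ψ₁ → IsState ψ₂ → 0 < t → t < 1 →
    φ = (t : ℂ) • ψ₁ + ((1 : ℂ) - (t : ℂ)) • ψ₂ → ψ₁ = φ ∧ ψ₂ = φ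

/-- A maximal abelian self-adjoint subalgebra (masa) of a (possibly non-unital)
C*-algebra: an abelian *-subalgebra equal to its own relative commutant. -/
def IsMasa {A : Type*} [NonUnitalCStarAlgebra A] (C : NonUnitalStarSubalgebra ℂ A) : Prop :=
  (∀ x ∈ C, ∀ y ∈ C, x * y = y * x) ∧ ∀ x : A, (∀ c ∈ C, c * x = x * c) → x ∈ C

/-- A masa of a unital C*-algebra (unital version). -/
def IsMasaU {A : Type*} [CStarAlgebra A] (C : StarSubalgebra ℂ A) : Prop :=
  (∀ x ∈ C, ∀ y ∈ C, x * y = y * x) ∧ ∀ x : A, (∀ c ∈ C, c * x = x * c) → x ∈ C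

/-- The Kadison-Singer extension property for a subalgebra of a possibly non-unital
C*-algebra: (i) every pure state (character) of `C` has a unique pure state extension
to `A`, and (ii) no pure state of `A` annihilates `C`. -/
def HasExtensionProperty {A : Type*} [NonUnitalCStarAlgebra A]
    (C : NonUnitalStarSubalgebra ℂ A) : Prop :=
  (∀ χ : ↥C →L[ℂ] ℂ, IsPureState χ →
      ∃! φ : A →L[ℂ] ℂ, IsPureState φ ∧ ∀ c : ↥C, φ ↑c = χ c) ∧
  ∀ φ : A →L[ℂ] ℂ, IsPureState φ → ∃ c ∈ C, φ c ≠ 0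

/-- The extension property for a unital subalgebra of a unital C*-algebra: every pure
state (character) of `C` has a unique pure state extension to `A`. -/
def HasExtensionPropertyU {A : Type*} [CStarAlgebra A] (C : StarSubalgebra ℂ A) : Prop :=
  ∀ χ : ↥C →L[ℂ] ℂ, IsPureState χ →
    ∃! φ : A →L[ℂ] ℂ, IsPureState φ ∧ ∀ c : ↥C, φ ↑c = χ c

/-- A C*-completion `T` of the algebraic tensor product `A₁ ⊙ A₂` with respect to a
C*-norm `β`: a C*-algebra together with commuting isometric embeddings of the factors
such that the induced map on the algebraic tensor product is injective (i.e. the norm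
of `T` restricts to a genuine C*-norm on `A₁ ⊙ A₂`) and has dense range. -/
structure CStarCompletion (A₁ A₂ T : Type*) [NonUnitalCStarAlgebra A₁]
    [NonUnitalCStarAlgebra A₂] [NonUnitalCStarAlgebra T] where
  ι₁ : A₁ →⋆ₙₐ[ℂ] T
  ι₂ : A₂ →⋆ₙₐ[ℂ] T
  isometry₁ : Isometry ι₁
  isometry₂ : Isometry ι₂
  commutes : ∀ (a : A₁) (b : A₂), ι₁ a * ι₂ b = ι₂ b * ι₁ a
  injective : ∀ (n : ℕ) (a : Fin n → A₁) (b : Fin n → A₂),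
      (∑ i, ι₁ (a i) * ι₂ (b i)) = 0 → (∑ i, a i ⊗ₜ[ℂ] b i : A₁ ⊗[ℂ] A₂) = 0
  dense_span : Dense (Submodule.span ℂ {x : T | ∃ a b, x = ι₁ a * ι₂ b} : Set T)

/-- The closure, in a C*-completion `T` of `A₁ ⊙ A₂`, of the linear span of the
elementary tensors `c₁ ⊗ c₂` with `cᵢ` in given subsets of the factors: this is the
canonical copy of `C₁ ⊗ C₂` inside `A₁ ⊗_β A₂`. -/
def tensorSet {A₁ A₂ T : Type*} [NonUnitalCStarAlgebra A₁] [NonUnitalCStarAlgebra A₂]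
    [NonUnitalCStarAlgebra T] (K : CStarCompletion A₁ A₂ T)
    (S₁ : Set A₁) (S₂ : Set A₂) : Set T :=
  closure (Submodule.span ℂ {x : T | ∃ a ∈ S₁, ∃ b ∈ S₂, x = K.ι₁ a * K.ι₂ b} : Set T)

/-- The canonical copy of `C₁ ⊗ C₂` inside `A₁ ⊗_β A₂`, as a closed non-unital
star subalgebra. -/
def tensorSubalg {A₁ A₂ T : Type*} [NonUnitalCStarAlgebra A₁] [NonUnitalCStarAlgebra A₂]
    [NonUnitalCStarAlgebra T] (K : CStarCompletion A₁ A₂ T)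
    (C₁ : NonUnitalStarSubalgebra ℂ A₁) (C₂ : NonUnitalStarSubalgebra ℂ A₂) :
    NonUnitalStarSubalgebra ℂ T :=
  (NonUnitalStarAlgebra.adjoin ℂ
    {x : T | ∃ a ∈ C₁, ∃ b ∈ C₂, x = K.ι₁ a * K.ι₂ b}).topologicalClosure

/-- A (two-sided) bounded approximate identity indexed by a directed set. -/
def IsApproxIdentity {A : Type*} [NonUnitalCStarAlgebra A] {ι : Type}
    [Preorder ι] (e : ι → A) : Prop :=
  (∀ i, ‖e i‖ ≤ 1) ∧ ∀ a : A,
    Filter.Tendsto (fun i => e i * a) Filter.atTop (nhds a) ∧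
    Filter.Tendsto (fun i => a * e i) Filter.atTop (nhds a)

/-- `S` contains a bounded approximate identity for `A`. -/
def ContainsApproxIdentity {A : Type*} [NonUnitalCStarAlgebra A] (S : Set A) : Prop :=
  ∃ (ι : Type) (_ : SemilatticeSup ι) (_ : Nonempty ι) (e : ι → A),
    (∀ i, e i ∈ S) ∧ IsApproxIdentity e

/-! ### Concrete setup: the free group `F₂`, `ℓ²(F₂)` and `B(ℓ²(F₂))` -/

/-- The free group on two generators. -/
abbrev G2 := FreeGroup (Fin 2)

/-- The Hilbert space `ℓ²(F₂)`. -/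
abbrev H2 := lp (fun _ : G2 => ℂ) 2

/-- The canonical orthonormal basis vector `ξ_g` of `ℓ²(F₂)`. -/
def xi (g : G2) : H2 := lp.single 2 g 1

/-- The rank-one operator `e_{g,h} : ξ ↦ ⟨ξ, ξ_h⟩ ξ_g` on `ℓ²(F₂)`; `e_{g,g}` is the
orthogonal projection onto `ℂ ξ_g`. -/
def EE (g h : G2) : H2 →L[ℂ] H2 := (innerSL ℂ (xi h)).smulRight (xi g)

/-- The reduced group C*-algebra `C*_r(F₂)`: the C*-subalgebra of `B(ℓ²(F₂))` generated
by the left regular representation `lam`. -/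
def CrS (lam : G2 → (H2 →L[ℂ] H2)) : StarSubalgebra ℂ (H2 →L[ℂ] H2) :=
  (StarAlgebra.adjoin ℂ (Set.range lam)).topologicalClosure

/-- The C*-algebra `A = C*_r(F₂) + K(ℓ²(F₂))`, as a subset of `B(ℓ²(F₂))`. -/
def Acar (lam : G2 → (H2 →L[ℂ] H2)) : Set (H2 →L[ℂ] H2) :=
  {x | ∃ a ∈ CrS lam, ∃ k : H2 →L[ℂ] H2, IsCompactOperator k ∧ x = a + k}

/-- The atomic masa `C`: the C*-algebra generated by the diagonal projections
`{e_g : g ∈ F₂}` together with `1`. -/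
def CS : StarSubalgebra ℂ (H2 →L[ℂ] H2) :=
  (StarAlgebra.adjoin ℂ (Set.range fun g : G2 => EE g g)).topologicalClosure

/-!
The projections `e_g` commute, and each element of `C` is a scalar plus a compact operator, so `C`
is an abelian subalgebra of `A`. Conversely, let `x = a + k` (`a ∈ C*_r(F₂)`, `k` compact) commute
with every `e_g`; then `x ξ_g = d_g ξ_g`. The diagonal coefficients `⟪ξ_g, a ξ_g⟫` of `a` all equal
the trace `τ(a)`, as they do for each `λ_h`, while those of `k` tend to `0` since a compact operator
maps an orthonormal family to a null family. So `d_g → τ(a)`, and by the bound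
`‖y‖ ≤ sup_g |c_g|` for diagonal operators `y`, `x` is the norm limit of the finite sums
`τ(a) • 1 + ∑_{g ∈ F} (d_g - τ(a)) • e_g`.
-/

open Filter Topology InnerProductSpace ContinuousLinearMap

section HilbertSpace

variable {ι 𝕜 E F : Type*} [RCLike 𝕜] [NormedAddCommGroup E] [InnerProductSpace 𝕜 E]
  [NormedAddCommGroup F] [InnerProductSpace 𝕜 F]

theorem Orthonormal.tendsto_inner_cofinite_zero {v : ι → E} (hv : Orthonormal 𝕜 v) (x : E) :
    Tendsto (fun i => ⟪x, v i⟫_𝕜) cofinite (𝓝 0) := by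
  rw [tendsto_zero_iff_norm_tendsto_zero]
  simpa [norm_inner_symm] using (hv.inner_products_summable x).tendsto_cofinite_zero.sqrt

theorem IsCompactOperator.tendsto_apply_orthonormal [CompleteSpace E] [CompleteSpace F]
    {T : E →L[𝕜] F} (hT : IsCompactOperator T) {v : ι → E} (hv : Orthonormal 𝕜 v) :
    Tendsto (fun i => T (v i)) cofinite (𝓝 0) := by
  refine (hT.isCompact_closure_image_closedBall 1).tendsto_nhds_of_unique_mapClusterPt
    (Eventually.of_forall fun i => subset_closure ⟨v i, by simp [hv.1 i], rfl⟩)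
    fun y _ hy => ?_
  have hweak : Tendsto (fun i => ⟪y, T (v i)⟫_𝕜) cofinite (𝓝 0) := by
    simpa only [adjoint_inner_left] using hv.tendsto_inner_cofinite_zero (adjoint T y)
  have hcluster : MapClusterPt ⟪y, y⟫_𝕜 cofinite (fun i => ⟪y, T (v i)⟫_𝕜) :=
    hy.continuousAt_comp (f := fun z => ⟪y, z⟫_𝕜) (by fun_prop)
  exact inner_self_eq_zero.1 (eq_of_nhds_neBot (hcluster.neBot.mono (inf_le_inf_left _ hweak)))

theorem isCompactOperator_rankOne (x : E) (y : F) : IsCompactOperator (rankOne 𝕜 x y) :=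
  (isCompactOperator_of_locallyCompactSpace_rng (toSpanSingleton 𝕜 x)).comp_clm (innerSL 𝕜 y)

namespace HilbertBasis

variable (b : HilbertBasis ι 𝕜 E) {T : E →L[𝕜] E} {d : ι → 𝕜}

theorem repr_apply_of_apply_eq_smul (hT : ∀ i, T (b i) = d i • b i) (x : E) (i : ι) :
    b.repr (T x) i = d i * b.repr x i := by
  classical
  rw [b.repr_apply_apply]
  refine (((b.hasSum_repr x).mapL T).mapL (innerSL 𝕜 (b i))).unique ?_
  convert hasSum_ite_eq i (d i * b.repr x i) using 2 with j
  rw [map_smul, hT, smul_smul, innerSL_apply_apply, inner_smul_right,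
    orthonormal_iff_ite.1 b.orthonormal]
  split_ifs <;> simp_all [mul_comm]

theorem opNorm_le_of_apply_eq_smul (hT : ∀ i, T (b i) = d i • b i) {ε : ℝ} (hε : 0 ≤ ε)
    (hd : ∀ i, ‖d i‖ ≤ ε) : ‖T‖ ≤ ε := by
  refine T.opNorm_le_bound hε fun x => ?_
  calc ‖T x‖ = ‖b.repr (T x)‖ := (b.repr.norm_map _).symm
    _ ≤ ‖(ε : 𝕜) • b.repr x‖ := lp.norm_mono two_ne_zero fun i => by
        rw [b.repr_apply_of_apply_eq_smul hT, lp.coeFn_smul, Pi.smul_apply, norm_smul, norm_mul,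
          RCLike.norm_ofReal, abs_of_nonneg hε]
        exact mul_le_mul_of_nonneg_right (hd i) (norm_nonneg _)
    _ = ε * ‖x‖ := by rw [norm_smul, RCLike.norm_ofReal, abs_of_nonneg hε, b.repr.norm_map]

theorem hasSum_smul_rankOne_of_tendsto_zero (hT : ∀ i, T (b i) = d i • b i)
    (hd : Tendsto d cofinite (𝓝 0)) : HasSum (fun i => d i • rankOne 𝕜 (b i) (b i)) T := by
  classical
  rw [HasSum, Metric.tendsto_nhds]
  intro ε hε
  have hfin : {i | ¬ ‖d i‖ < ε / 2}.Finite := by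
    simpa using eventually_cofinite.1
      (hd.norm.eventually (gt_mem_nhds (by simpa using half_pos hε)))
  filter_upwards [eventually_ge_atTop hfin.toFinset] with s hs
  have hrem : ∀ j, (T - ∑ i ∈ s, d i • rankOne 𝕜 (b i) (b i)) (b j)
      = (if j ∈ s then 0 else d j) • b j := by
    intro j
    simp only [sub_apply, sum_apply, smul_apply, rankOne_apply, orthonormal_iff_ite.1 b.orthonormal,
      ite_smul, one_smul, zero_smul, smul_ite, smul_zero, Finset.sum_ite_eq', hT]
    split_ifs <;> simp
  rw [dist_comm, dist_eq_norm]
  refine (b.opNorm_le_of_apply_eq_smul hrem (half_pos hε).le fun j => ?_).trans_lt (half_lt_self hε)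
  split_ifs with hj
  · simpa using (half_pos hε).le
  · exact not_lt.1 fun h => hj (hs (by simpa using h.le))

end HilbertBasis

end HilbertSpace

section ScalarAddCompact

variable (𝕜 E : Type*) [NontriviallyNormedField 𝕜] [NormedAddCommGroup E] [NormedSpace 𝕜 E]

def scalarAddCompact : Subalgebra 𝕜 (E →L[𝕜] E) :=
  (compactOperator (RingHom.id 𝕜) E E ⊔ Submodule.span 𝕜 {1}).toSubalgebra
    (Submodule.mem_sup_right (Submodule.mem_span_singleton_self 1))
    fun x y hx hy => by
      obtain ⟨k, hk, _, hc, rfl⟩ := Submodule.mem_sup.1 hy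
      obtain ⟨c, rfl⟩ := Submodule.mem_span_singleton.1 hc
      rw [mul_add, mul_smul_comm, mul_one]
      exact add_mem (Submodule.mem_sup_left (hk.clm_comp x)) (Submodule.smul_mem _ c hx)

theorem isClosed_scalarAddCompact [CompleteSpace 𝕜] [CompleteSpace E] :
    IsClosed (scalarAddCompact 𝕜 E : Set (E →L[𝕜] E)) :=
  Submodule.isClosed_sup_finiteDimensional _ _ isClosed_setOfPred_isCompactOperator

variable {𝕜 E}

theorem exists_eq_smul_one_add_of_mem_scalarAddCompact {x : E →L[𝕜] E}
    (hx : x ∈ scalarAddCompact 𝕜 E) :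
    ∃ c : 𝕜, ∃ k : E →L[𝕜] E, IsCompactOperator k ∧ x = c • 1 + k := by
  obtain ⟨k, hk, _, hc, rfl⟩ := Submodule.mem_sup.1 hx
  obtain ⟨c, rfl⟩ := Submodule.mem_span_singleton.1 hc
  exact ⟨c, k, hk, add_comm _ _⟩

end ScalarAddCompact

theorem StarAlgebra.adjoin_range_eq_span {G R A : Type*} [Group G] [CommSemiring R] [StarRing R]
    [Semiring A] [StarRing A] [Algebra R A] [StarModule R A] (ρ : G →* A)
    (hρ : ∀ g, star (ρ g) = ρ g⁻¹) :
    Subalgebra.toSubmodule (adjoin R (Set.range ρ)).toSubalgebra =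
      Submodule.span R (Set.range ρ) := by
  have hstar : star (Set.range ρ) ⊆ Set.range ρ := by
    rintro _ ⟨g, hg⟩
    exact ⟨g⁻¹, by rw [← hρ, hg, star_star]⟩
  rw [adjoin_eq_span, Set.union_eq_left.2 hstar, ← MonoidHom.coe_mrange, Submonoid.closure_eq]

section FreeGroup

def xiBasis : HilbertBasis G2 ℂ H2 := HilbertBasis.ofRepr (LinearIsometryEquiv.refl ℂ H2)

theorem coe_xiBasis : ⇑xiBasis = xi := funext fun g => (xiBasis.repr_symm_single g).symm

theorem orthonormal_xi : Orthonormal ℂ xi := coe_xiBasis ▸ xiBasis.orthonormal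

theorem inner_xi_xi (g h : G2) : ⟪xi g, xi h⟫_ℂ = if g = h then 1 else 0 :=
  orthonormal_iff_ite.1 orthonormal_xi g h

theorem ext_xi {A B : H2 →L[ℂ] H2} (h : ∀ g, A (xi g) = B (xi g)) : A = B :=
  ContinuousLinearMap.ext_on
    (coe_xiBasis ▸ Submodule.dense_iff_topologicalClosure_eq_top.2 xiBasis.dense_span)
    (by rintro _ ⟨g, rfl⟩; exact h g)

theorem ext_inner_xi {v w : H2} (h : ∀ g, ⟪xi g, v⟫_ℂ = ⟪xi g, w⟫_ℂ) : v = w :=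
  xiBasis.repr.injective <| lp.ext <| funext fun g => by
    simpa only [xiBasis.repr_apply_apply, coe_xiBasis] using h g

theorem EE_eq_rankOne (g h : G2) : EE g h = rankOne ℂ (xi g) (xi h) := rfl

theorem star_EE (g h : G2) : star (EE g h) = EE h g := by
  rw [EE_eq_rankOne, star_eq_adjoint, adjoint_rankOne, EE_eq_rankOne]

theorem EE_mem_CS (g : G2) : EE g g ∈ CS :=
  StarSubalgebra.le_topologicalClosure _ (StarAlgebra.subset_adjoin ℂ _ ⟨g, rfl⟩)

theorem CS_subset_scalarAddCompact : (CS : Set (H2 →L[ℂ] H2)) ⊆ scalarAddCompact ℂ H2 := by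
  rw [CS, StarSubalgebra.topologicalClosure_coe]
  refine closure_minimal ?_ (isClosed_scalarAddCompact ℂ H2)
  rw [← StarSubalgebra.coe_toSubalgebra, StarAlgebra.adjoin_toSubalgebra]
  refine Algebra.adjoin_le ?_
  rintro x (⟨g, rfl⟩ | ⟨g, hg⟩)
  · exact Submodule.mem_sup_left (isCompactOperator_rankOne _ _)
  · rw [← star_star x, ← hg, star_EE]
    exact Submodule.mem_sup_left (isCompactOperator_rankOne _ _)

theorem CS_subset_Acar (lam : G2 → (H2 →L[ℂ] H2)) : (CS : Set (H2 →L[ℂ] H2)) ⊆ Acar lam := by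
  intro x hx
  obtain ⟨c, k, hk, rfl⟩ :=
    exists_eq_smul_one_add_of_mem_scalarAddCompact (CS_subset_scalarAddCompact hx)
  exact ⟨c • 1, by rw [← Algebra.algebraMap_eq_smul_one]; exact algebraMap_mem _ c, k, hk, rfl⟩

theorem CS_mul_comm {x y : H2 →L[ℂ] H2} (hx : x ∈ CS) (hy : y ∈ CS) : x * y = y * x := by
  have hcomm : ∀ a ∈ Set.range (fun g : G2 => EE g g), ∀ b ∈ Set.range (fun g : G2 => EE g g),
      a * b = b * a := by
    rintro _ ⟨g, rfl⟩ _ ⟨h, rfl⟩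
    simp only [EE_eq_rankOne, mul_def, rankOne_comp_rankOne, inner_xi_xi]
    split_ifs <;> simp_all
  have := StarAlgebra.isMulCommutative_adjoin ℂ hcomm (by
    rintro _ ha _ ⟨h, rfl⟩; rw [star_EE]; exact hcomm _ ha _ ⟨h, rfl⟩)
  let D := StarAlgebra.adjoin ℂ (Set.range fun g : G2 => EE g g)
  let _ := D.commRingTopologicalClosure fun a b => Std.Commutative.comm a b
  exact congrArg Subtype.val (mul_comm (⟨x, hx⟩ : D.topologicalClosure) ⟨y, hy⟩)

section RegularRepresentation

variable {lam : G2 → (H2 →L[ℂ] H2)} (hlam : ∀ g h : G2, lam g (xi h) = xi (g * h))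
include hlam

theorem star_lam (g : G2) : star (lam g) = lam g⁻¹ := by
  refine ext_xi fun m => ext_inner_xi fun k => ?_
  rw [star_eq_adjoint, adjoint_inner_right, hlam, hlam, inner_xi_xi, inner_xi_xi]
  simp [eq_inv_mul_iff_mul_eq]

def regularRep : G2 →* (H2 →L[ℂ] H2) where
  toFun := lam
  map_one' := ext_xi fun h => by simp [hlam]
  map_mul' g h := ext_xi fun k => by simp [hlam, mul_assoc]

theorem inner_xi_apply_xi_of_mem_CrS {a : H2 →L[ℂ] H2} (ha : a ∈ CrS lam) (g : G2) :
    ⟪xi g, a (xi g)⟫_ℂ = ⟪xi 1, a (xi 1)⟫_ℂ := by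
  let ω : G2 → (H2 →L[ℂ] H2) →L[ℂ] ℂ := fun g => (innerSL ℂ (xi g)).comp (apply ℂ H2 (xi g))
  let S : Submodule ℂ (H2 →L[ℂ] H2) := ⨅ g, LinearMap.eqLocus (ω g).toLinearMap (ω 1)
  have hS : IsClosed (S : Set (H2 →L[ℂ] H2)) := by
    rw [Submodule.coe_iInf]
    exact isClosed_iInter fun h => isClosed_eq (ω h).continuous (ω 1).continuous
  have hspan : Submodule.span ℂ (Set.range lam) ≤ S := by
    refine Submodule.span_le.2 ?_
    rintro _ ⟨h, rfl⟩
    simp only [S, SetLike.mem_coe, Submodule.mem_iInf, LinearMap.mem_eqLocus]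
    intro k
    simp [ω, hlam, inner_xi_xi, eq_comm]
  have hadjoin : Subalgebra.toSubmodule (StarAlgebra.adjoin ℂ (Set.range lam)).toSubalgebra =
      Submodule.span ℂ (Set.range lam) :=
    StarAlgebra.adjoin_range_eq_span (regularRep hlam) (star_lam hlam)
  rw [← hadjoin] at hspan
  exact (Submodule.mem_iInf _).1 (closure_minimal hspan hS ha) g

end RegularRepresentation

theorem apply_xi_eq_of_commute {x : H2 →L[ℂ] H2} (g : G2) (hx : EE g g * x = x * EE g g) :
    x (xi g) = ⟪xi g, x (xi g)⟫_ℂ • xi g := by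
  simpa [EE_eq_rankOne, orthonormal_xi.1 g] using (congrArg (· (xi g)) hx).symm

theorem mem_CS_of_apply_xi_eq_smul {x : H2 →L[ℂ] H2} {d : G2 → ℂ} {τ : ℂ}
    (hx : ∀ g, x (xi g) = d g • xi g) (hd : Tendsto d cofinite (𝓝 τ)) : x ∈ CS := by
  have hsum : HasSum (fun g => (d g - τ) • EE g g) (x - τ • 1) := by
    simpa only [coe_xiBasis, EE_eq_rankOne] using xiBasis.hasSum_smul_rankOne_of_tendsto_zero
      (T := x - τ • 1) (by simp [coe_xiBasis, hx, sub_smul]) (by simpa using hd.sub_const τ)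
  have hCS : IsClosed (CS : Set (H2 →L[ℂ] H2)) := StarSubalgebra.isClosed_topologicalClosure _
  have hsub : x - τ • 1 ∈ CS := hCS.mem_of_tendsto hsum
    (Eventually.of_forall fun s => sum_mem fun g _ => CS.smul_mem (EE_mem_CS g) _)
  simpa using add_mem hsub (CS.smul_mem (one_mem CS) τ)

theorem mem_CS_of_mem_Acar_of_commute {lam : G2 → (H2 →L[ℂ] H2)}
    (hlam : ∀ g h : G2, lam g (xi h) = xi (g * h)) {x : H2 →L[ℂ] H2} (hx : x ∈ Acar lam)
    (hcomm : ∀ c ∈ CS, c * x = x * c) : x ∈ CS := by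
  obtain ⟨a, ha, k, hk, rfl⟩ := hx
  have hk0 : Tendsto (fun g => ⟪xi g, k (xi g)⟫_ℂ) cofinite (𝓝 0) :=
    squeeze_zero_norm
      (fun g => (norm_inner_le_norm _ _).trans_eq (by rw [orthonormal_xi.1 g, one_mul]))
      (by simpa using (hk.tendsto_apply_orthonormal orthonormal_xi).norm)
  set τ := ⟪xi 1, a (xi 1)⟫_ℂ
  refine mem_CS_of_apply_xi_eq_smul (fun g => apply_xi_eq_of_commute g (hcomm _ (EE_mem_CS g)))
    (τ := τ) ?_
  simpa [τ, inner_add_right, inner_xi_apply_xi_of_mem_CrS hlam ha] using hk0.const_add τ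

end FreeGroup

theorem stmt_9 (lam : G2 → (H2 →L[ℂ] H2))
    (hlam : ∀ g h : G2, lam g (xi h) = xi (g * h)) :
    ((CS : Set (H2 →L[ℂ] H2)) ⊆ Acar lam) ∧
    (∀ x ∈ CS, ∀ y ∈ CS, x * y = y * x) ∧
    ∀ x ∈ Acar lam, (∀ c ∈ CS, c * x = x * c) → x ∈ CS :=
  ⟨CS_subset_Acar lam, fun _ hx _ hy => CS_mul_comm hx hy,
    fun _ hx hcomm => mem_CS_of_mem_Acar_of_commute hlam hx hcomm⟩
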